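/- arXiv:2107.05696 — 2 statements merged into one kernel-verified Lean document; each statement's English description precedes it below -/
import Mathlib

section
/- Let X be a skew brace with operations x ▷ y = y^∘ ∘ (x * y) and x ◁ y = y^∘ ∘ (y * x). Then for all x, y, z ∈ X the third exchange law holds: (x ◁ y) ◁ (z ◁ y) = (x ◁ z) ◁ (y ▷ z). -/
structure SkewBrace (X : Type*) where
  circ : X → X → X
  cinv : X → X
  ce : X
  star : X → X → X
  sinv : X → X
  se : X
  circ_assoc : ∀ a b c, circ (circ a b) c = circ a (circ b c)
  ce_circ : ∀ a, circ ce a = a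
  circ_ce : ∀ a, circ a ce = a
  cinv_circ : ∀ a, circ (cinv a) a = ce
  circ_cinv : ∀ a, circ a (cinv a) = ce
  star_assoc : ∀ a b c, star (star a b) c = star a (star b c)
  se_star : ∀ a, star se a = a
  star_se : ∀ a, star a se = a
  sinv_star : ∀ a, star (sinv a) a = se
  star_sinv : ∀ a, star a (sinv a) = se
  distrib : ∀ x y z, circ x (star y z) = star (star (circ x y) (sinv x)) (circ x z)

def SkewBrace.tri {X : Type*} (B : SkewBrace X) (x y : X) : X :=
  B.circ (B.cinv y) (B.star x y)

def SkewBrace.ov {X : Type*} (B : SkewBrace X) (x y : X) : X :=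
  B.circ (B.cinv y) (B.star y x)

def SkewBrace.triInv {X : Type*} (B : SkewBrace X) (x y : X) : X :=
  B.star (B.circ y x) (B.sinv y)

def SkewBrace.ovInv {X : Type*} (B : SkewBrace X) (x y : X) : X :=
  B.star (B.sinv y) (B.circ y x)

/-!
Writing `λ a u = a^* * (a ∘ u)`, the skew brace axiom makes `λ` an action of `(X, ∘)` on `X`, and
`x ◁ y = λ (y^∘) x`. Hence `(x ◁ y) ◁ w = λ ((y ∘ w)^∘) x`, and the two sides of the exchange law
agree because `y ∘ (z ◁ y) = y * z = z ∘ (y ▷ z)`.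
-/

namespace SkewBrace

variable {X : Type*} (B : SkewBrace X)

lemma star_left_cancel {a b c : X} (h : B.star a b = B.star a c) : b = c := by
  simpa only [← B.star_assoc, B.sinv_star, B.se_star] using congrArg (B.star (B.sinv a)) h

lemma circ_se (a : X) : B.circ a B.se = a := by
  have h := B.distrib a B.se B.se
  rw [B.se_star, B.star_assoc] at h
  have se_eq : B.se = B.star (B.sinv a) (B.circ a B.se) :=
    B.star_left_cancel (by rw [B.star_se]; exact h)
  calc B.circ a B.se = B.star (B.star a (B.sinv a)) (B.circ a B.se) := by
        rw [B.star_sinv, B.se_star]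
    _ = a := by rw [B.star_assoc, ← se_eq, B.star_se]

lemma se_eq_ce : B.se = B.ce := by
  simpa only [B.ce_circ] using B.circ_se B.ce

lemma eq_cinv_of_circ_eq_ce {a b : X} (h : B.circ b a = B.ce) : b = B.cinv a := by
  simpa only [B.circ_assoc, B.circ_cinv, B.circ_ce, B.ce_circ]
    using congrArg (B.circ · (B.cinv a)) h

lemma cinv_circ_rev (a b : X) : B.cinv (B.circ a b) = B.circ (B.cinv b) (B.cinv a) := by
  refine (B.eq_cinv_of_circ_eq_ce ?_).symm
  rw [B.circ_assoc, ← B.circ_assoc (B.cinv a), B.cinv_circ, B.ce_circ, B.cinv_circ]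

lemma sinv_circ (a b : X) :
    B.sinv (B.circ a b) = B.star (B.star (B.sinv a) (B.circ a (B.sinv b))) (B.sinv a) := by
  have h := B.distrib a b (B.sinv b)
  rw [B.star_sinv, B.circ_se] at h
  apply B.star_left_cancel (a := B.circ a b)
  rw [B.star_sinv, ← B.star_assoc, ← B.star_assoc, ← h, B.star_sinv]

def lam (a u : X) : X := B.star (B.sinv a) (B.circ a u)

lemma lam_circ (a b u : X) : B.lam (B.circ a b) u = B.lam a (B.lam b u) := by
  unfold lam
  rw [B.sinv_circ, B.distrib a (B.sinv b) (B.circ b u), B.circ_assoc]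
  simp only [B.star_assoc]

lemma ov_eq_lam (x y : X) : B.ov x y = B.lam (B.cinv y) x := by
  unfold ov lam
  rw [B.distrib, B.cinv_circ, ← B.se_eq_ce, B.se_star]

lemma ov_ov (x y w : X) : B.ov (B.ov x y) w = B.lam (B.cinv (B.circ y w)) x := by
  rw [B.ov_eq_lam, B.ov_eq_lam, ← B.lam_circ, B.cinv_circ_rev]

lemma circ_ov (y z : X) : B.circ y (B.ov z y) = B.star y z := by
  rw [ov, ← B.circ_assoc, B.circ_cinv, B.ce_circ]

lemma circ_tri (y z : X) : B.circ z (B.tri y z) = B.star y z := by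
  rw [tri, ← B.circ_assoc, B.circ_cinv, B.ce_circ]

end SkewBrace

theorem skewBrace_third_exchange {X : Type*} (B : SkewBrace X) (x y z : X) :
    B.ov (B.ov x y) (B.ov z y) = B.ov (B.ov x z) (B.tri y z) := by
  rw [B.ov_ov, B.ov_ov, B.circ_ov, B.circ_tri]
end

section
/- Let X be a skew brace in which the operation * is commutative. Then the map r : X × X → X × X defined by r(x,y) = ( x^* * (x ∘ y), (x^* * (x ∘ y))^∘ ∘ x ∘ y ) satisfies r ∘ r = id. -/
namespace SkewBrace

variable {X : Type*} (B : SkewBrace X)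

theorem cinv_circ_cancel_left (a b : X) : B.circ (B.cinv a) (B.circ a b) = b := by
  rw [← B.circ_assoc, B.cinv_circ, B.ce_circ]

theorem circ_cinv_cancel_left (a b : X) : B.circ a (B.circ (B.cinv a) b) = b := by
  rw [← B.circ_assoc, B.circ_cinv, B.ce_circ]

theorem sinv_star_cancel_left (a b : X) : B.star (B.sinv a) (B.star a b) = b := by
  rw [← B.star_assoc, B.sinv_star, B.se_star]

theorem star_sinv_cancel_left (a b : X) : B.star a (B.star (B.sinv a) b) = b := by
  rw [← B.star_assoc, B.star_sinv, B.se_star]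

def lambda (x y : X) : X :=
  B.star (B.sinv x) (B.circ x y)

def solution (p : X × X) : X × X :=
  (B.lambda p.1 p.2, B.circ (B.circ (B.cinv (B.lambda p.1 p.2)) p.1) p.2)

theorem star_lambda (x y : X) : B.star x (B.lambda x y) = B.circ x y :=
  B.star_sinv_cancel_left x _

theorem solution_snd (p : X × X) :
    (B.solution p).2 = B.circ (B.cinv (B.solution p).1) (B.circ p.1 p.2) :=
  B.circ_assoc _ _ _

theorem circ_solution (p : X × X) :
    B.circ (B.solution p).1 (B.solution p).2 = B.circ p.1 p.2 := by
  rw [solution_snd, circ_cinv_cancel_left]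

theorem lambda_solution_of_star_comm (hcomm : ∀ a b : X, B.star a b = B.star b a)
    (p : X × X) : B.lambda (B.solution p).1 (B.solution p).2 = p.1 := by
  rw [lambda, circ_solution, ← star_lambda, hcomm p.1]
  exact B.sinv_star_cancel_left _ _

theorem solution_involutive_of_star_comm (hcomm : ∀ a b : X, B.star a b = B.star b a) :
    Function.Involutive B.solution := by
  intro p
  have hfst : (B.solution (B.solution p)).1 = p.1 := B.lambda_solution_of_star_comm hcomm p
  refine Prod.ext hfst ?_
  rw [solution_snd, hfst, circ_solution, cinv_circ_cancel_left]

end SkewBrace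

theorem skewBrace_involutive_of_star_comm {X : Type*} (B : SkewBrace X)
    (hcomm : ∀ a b : X, B.star a b = B.star b a) :
    (fun p : X × X =>
        (B.star (B.sinv p.1) (B.circ p.1 p.2),
         B.circ (B.circ (B.cinv (B.star (B.sinv p.1) (B.circ p.1 p.2))) p.1) p.2)) ∘
    (fun p : X × X =>
        (B.star (B.sinv p.1) (B.circ p.1 p.2),
         B.circ (B.circ (B.cinv (B.star (B.sinv p.1) (B.circ p.1 p.2))) p.1) p.2)) = id :=
  (B.solution_involutive_of_star_comm hcomm).comp_self
end
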